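/- arXiv:1009.4762 — 3 statements merged into one kernel-verified Lean document; each statement's English description precedes it below -/
import Mathlib

section
/- Deformed associativity in an exact group factorization: let G be a group, H ⊆ G a subgroup, and L ⊆ G a subset containing e with unique factorization g = ℓ(g)η(g) (ℓ(g) ∈ L, η(g) ∈ H), inducing the product a·b := ℓ(ab) on L. If additionally h a h⁻¹ ∈ L for all h ∈ H and a ∈ L, then for all a, b, c ∈ L: a·(b·c) = (a·b)·(η(ab) c η(ab)⁻¹), where the conjugation is taken in G. -/
/-- Deformed associativity in an exact group factorization `G = L·H` with `L`
stable under conjugation by `H`: for the induced product `a·b := ℓ(ab)` on `L`,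
`a·(b·c) = (a·b)·(η(ab) c η(ab)⁻¹)`. -/
theorem exact_factorization_deformed_associativity {G : Type*} [Group G]
    (H : Subgroup G) (L : Set G)
    (heL : (1 : G) ∈ L)
    (ℓ η : G → G)
    (hfac : ∀ g : G, ℓ g ∈ L ∧ η g ∈ H ∧ g = ℓ g * η g)
    (huniq : ∀ g a h : G, a ∈ L → h ∈ H → g = a * h → a = ℓ g ∧ h = η g)
    (hconj : ∀ h ∈ H, ∀ a ∈ L, h * a * h⁻¹ ∈ L) :
    ∀ a ∈ L, ∀ b ∈ L, ∀ c ∈ L,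
      ℓ (a * ℓ (b * c)) = ℓ (ℓ (a * b) * (η (a * b) * c * (η (a * b))⁻¹)) := by
  intro a ha b hb c hc
  obtain ⟨hL1, hH1, he1⟩ := hfac (b * c)
  obtain ⟨hL2, hH2, he2⟩ := hfac (a * ℓ (b * c))
  obtain ⟨hL3, hH3, he3⟩ := hfac (a * b)
  set k := η (a * b) * c * (η (a * b))⁻¹ with hk
  have hkL : k ∈ L := hconj _ hH3 _ hc
  obtain ⟨hL4, hH4, he4⟩ := hfac (ℓ (a * b) * k)
  -- two decompositions of a*b*c
  have d1 : a * b * c = ℓ (a * ℓ (b * c)) * (η (a * ℓ (b * c)) * η (b * c)) := by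
    have : a * b * c = a * (ℓ (b * c) * η (b * c)) := by rw [← he1]; group
    rw [this]
    conv_lhs => rw [← mul_assoc, he2]
    group
  have d2 : a * b * c = ℓ (ℓ (a * b) * k) * (η (ℓ (a * b) * k) * η (a * b)) := by
    have h1 : ℓ (a * b) * k = a * b * c * (η (a * b))⁻¹ := by
      rw [hk, ← mul_assoc, ← mul_assoc, ← he3]
    have : a * b * c = ℓ (a * b) * k * η (a * b) := by rw [h1]; group
    conv_lhs => rw [this, he4]
    group
  have u1 := huniq (a * b * c) _ _ hL2 (mul_mem hH2 hH1) d1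
  have u2 := huniq (a * b * c) _ _ hL4 (mul_mem hH4 hH3) d2
  rw [u1.1, u2.1]
end

section
/- Gyrocommutativity in an exact group factorization: let G be a group, H ⊆ G a subgroup, and L ⊆ G a subset containing e with unique factorization g = ℓ(g)η(g), inducing the product a·b := ℓ(ab) on L. Assume h a h⁻¹ ∈ L for all h ∈ H, a ∈ L; that a⁻¹ ∈ L for all a ∈ L; and that the automorphic inverse property holds: (a·b)⁻¹ = a⁻¹·b⁻¹ for all a, b ∈ L (inverses taken in G). Then for all a, b ∈ L: a·b = η(ab) (b·a) η(ab)⁻¹, where the conjugation is taken in G. -/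
/-- Gyrocommutativity in an exact group factorization `G = L·H`: if `L` is stable
under conjugation by `H`, closed under inversion, and satisfies the automorphic
inverse property `(a·b)⁻¹ = a⁻¹·b⁻¹`, then `a·b = η(ab) (b·a) η(ab)⁻¹`. -/
theorem exact_factorization_gyrocommutativity {G : Type*} [Group G]
    (H : Subgroup G) (L : Set G)
    (heL : (1 : G) ∈ L)
    (ℓ η : G → G)
    (hfac : ∀ g : G, ℓ g ∈ L ∧ η g ∈ H ∧ g = ℓ g * η g)
    (huniq : ∀ g a h : G, a ∈ L → h ∈ H → g = a * h → a = ℓ g ∧ h = η g)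
    (hconj : ∀ h ∈ H, ∀ a ∈ L, h * a * h⁻¹ ∈ L)
    (hLinv : ∀ a ∈ L, a⁻¹ ∈ L)
    (hAIP : ∀ a ∈ L, ∀ b ∈ L, (ℓ (a * b))⁻¹ = ℓ (a⁻¹ * b⁻¹)) :
    ∀ a ∈ L, ∀ b ∈ L, ℓ (a * b) = η (a * b) * ℓ (b * a) * (η (a * b))⁻¹ := by
  intro a ha b hb
  obtain ⟨hℓ, hη, hdec⟩ := hfac (a * b)
  -- candidate factorization of (a*b)⁻¹
  have hc : (η (a * b))⁻¹ * (ℓ (a * b))⁻¹ * ((η (a * b))⁻¹)⁻¹ ∈ L :=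
    hconj _ (H.inv_mem hη) _ (hLinv _ hℓ)
  have hfac' : (a * b)⁻¹ =
      ((η (a * b))⁻¹ * (ℓ (a * b))⁻¹ * ((η (a * b))⁻¹)⁻¹) * (η (a * b))⁻¹ := by
    conv_lhs => rw [hdec]
    group
  have h1 := huniq ((a * b)⁻¹) _ _ hc (H.inv_mem hη) hfac'
  have h2 : ℓ ((a * b)⁻¹) = (ℓ (b * a))⁻¹ := by
    rw [mul_inv_rev, hAIP b hb a ha]
  have h3 : (η (a * b))⁻¹ * (ℓ (a * b))⁻¹ * ((η (a * b))⁻¹)⁻¹ = (ℓ (b * a))⁻¹ := by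
    rw [h1.1, h2]
  have := congrArg (·⁻¹) h3
  simp only [mul_inv_rev, inv_inv] at this ⊢
  rw [← this]; group
end

section
/- The loop algebra of a left K-loop is a K-Hopf loop: let k be a commutative ring and (L, ·, e) a loop satisfying the left Bol identity, equipped with an inversion map a ↦ a⁻¹ such that a⁻¹·(a·b) = b, (a⁻¹)⁻¹ = a, and the automorphic inverse property (a·b)⁻¹ = a⁻¹·b⁻¹ hold for all a, b ∈ L. On the free k-module k[L] (finitely supported functions L → k), extend · bilinearly to a product, define Δ as the linear extension of a ↦ a ⊗ a, ε as the linear extension of a ↦ 1, and S as the linear extension of a ↦ a⁻¹. Then for all x, y, z ∈ k[L]: (i) x₍₁₎·(y·(x₍₂₎·z)) = (x₍₁₎·(y·x₍₂₎))·z; (ii) x₍₁₎·(S(x₍₂₎)·y) = ε(x)y = S(x₍₁₎)·(x₍₂₎·y); (iii) S(x·y) = S(x)·S(y); (iv) Δ(S(x)) = S(x₍₁₎) ⊗ S(x₍₂₎). -/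
open TensorProduct

/-- The bilinear extension of a loop product to the free module `k[L]`. -/
noncomputable def loopMul {k L : Type*} [CommRing k] (mul : L → L → L) :
    (L →₀ k) →ₗ[k] (L →₀ k) →ₗ[k] (L →₀ k) :=
  Finsupp.lift ((L →₀ k) →ₗ[k] (L →₀ k)) k L fun a =>
    Finsupp.lift (L →₀ k) k L fun b => Finsupp.single (mul a b) 1

/-- The coproduct on `k[L]`, the linear extension of `a ↦ a ⊗ a`. -/
noncomputable def loopComul (k L : Type*) [CommRing k] :
    (L →₀ k) →ₗ[k] (L →₀ k) ⊗[k] (L →₀ k) :=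
  Finsupp.lift ((L →₀ k) ⊗[k] (L →₀ k)) k L fun a =>
    Finsupp.single a 1 ⊗ₜ[k] Finsupp.single a 1

/-- The counit on `k[L]`, the linear extension of `a ↦ 1`. -/
noncomputable def loopCounit (k L : Type*) [CommRing k] : (L →₀ k) →ₗ[k] k :=
  Finsupp.lift k k L fun _ => 1

/-- The antipode on `k[L]`, the linear extension of `a ↦ a⁻¹`. -/
noncomputable def loopAntipode {k L : Type*} [CommRing k] (inv : L → L) :
    (L →₀ k) →ₗ[k] (L →₀ k) :=
  Finsupp.lift (L →₀ k) k L fun a => Finsupp.single (inv a) 1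

/-! Every basis element `a` of `k[L]` is grouplike, `Δa = a ⊗ a` and `ε a = 1`, and all four
identities are multilinear. So it suffices to check them on basis elements, where they become
the left Bol identity, the two left inverse properties and the automorphic inverse property
of `L`; the comultiplicativity of the antipode says that `a⁻¹` is grouplike too. -/

section LoopAlgebra

open Finsupp

variable {k L : Type*} [CommRing k]

@[simp]
lemma loopMul_single_single (mul : L → L → L) (a b : L) (r s : k) :
    loopMul mul (single a r) (single b s) = single (mul a b) (r * s) := by
  simp [loopMul, lift_apply, smul_single]

@[simp]
lemma loopComul_single (a : L) (r : k) :
    loopComul k L (single a r) = r • (single a 1 ⊗ₜ[k] single a 1) := by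
  simp [loopComul, lift_apply]

@[simp]
lemma loopCounit_single (a : L) (r : k) : loopCounit k L (single a r) = r := by
  simp [loopCounit, lift_apply]

@[simp]
lemma loopAntipode_single (inv : L → L) (a : L) (r : k) :
    loopAntipode inv (single a r) = single (inv a) r := by
  simp [loopAntipode, lift_apply, smul_single]

section Grouplike

variable {M : Type*} [AddCommGroup M] [Module k M]

lemma lift_loopComul_congr {B B' : (L →₀ k) →ₗ[k] (L →₀ k) →ₗ[k] M}
    (h : ∀ a, B (single a 1) (single a 1) = B' (single a 1) (single a 1)) (x : L →₀ k) :
    TensorProduct.lift B (loopComul k L x) = TensorProduct.lift B' (loopComul k L x) := by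
  suffices TensorProduct.lift B ∘ₗ loopComul k L = TensorProduct.lift B' ∘ₗ loopComul k L from
    LinearMap.congr_fun this x
  ext a
  simpa using h a

lemma lift_loopComul_eq_loopCounit_smul {B : (L →₀ k) →ₗ[k] (L →₀ k) →ₗ[k] M} {m : M}
    (h : ∀ a, B (single a 1) (single a 1) = m) (x : L →₀ k) :
    TensorProduct.lift B (loopComul k L x) = loopCounit k L x • m := by
  suffices TensorProduct.lift B ∘ₗ loopComul k L = (loopCounit k L).smulRight m from
    LinearMap.congr_fun this x
  ext a
  simpa using h a

end Grouplike

variable {mul : L → L → L} {inv : L → L}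

lemma loopMul_single_bol (hbol : ∀ a b c, mul a (mul b (mul a c)) = mul (mul a (mul b a)) c)
    (a : L) (y z : L →₀ k) :
    loopMul mul (single a 1) (loopMul mul y (loopMul mul (single a 1) z))
      = loopMul mul (loopMul mul (single a 1) (loopMul mul y (single a 1))) z := by
  let m := loopMul (k := k) mul (single a 1)
  suffices ((loopMul mul).compl₂ m).compr₂ m
      = (loopMul mul).comp (m ∘ₗ (loopMul mul).flip (single a 1)) from
    LinearMap.congr_fun₂ this y z
  ext b c
  simp [m, hbol]

lemma loopMul_single_loopMul_single {a b : L} (h : ∀ c, mul a (mul b c) = c) (y : L →₀ k) :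
    loopMul mul (single a 1) (loopMul mul (single b 1) y) = y := by
  suffices loopMul mul (single a 1) ∘ₗ loopMul (k := k) mul (single b 1) = LinearMap.id from
    LinearMap.congr_fun this y
  ext c
  simp [h]

lemma loopAntipode_loopMul (hAIP : ∀ a b, inv (mul a b) = mul (inv a) (inv b))
    (x y : L →₀ k) :
    loopAntipode inv (loopMul mul x y)
      = loopMul mul (loopAntipode inv x) (loopAntipode inv y) := by
  suffices (loopMul mul).compr₂ (loopAntipode (k := k) inv)
      = (loopMul mul).compl₁₂ (loopAntipode inv) (loopAntipode inv) from
    LinearMap.congr_fun₂ this x y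
  ext a b
  simp [hAIP]

lemma loopComul_loopAntipode (x : L →₀ k) :
    loopComul k L (loopAntipode inv x)
      = TensorProduct.map (loopAntipode inv) (loopAntipode inv) (loopComul k L x) := by
  suffices loopComul k L ∘ₗ loopAntipode inv
      = TensorProduct.map (loopAntipode inv) (loopAntipode inv) ∘ₗ loopComul k L from
    LinearMap.congr_fun this x
  ext a
  simp

end LoopAlgebra

theorem loop_algebra_is_kHopfLoop_general {k L : Type*} [CommRing k]
    (mul : L → L → L) (inv : L → L)
    (hbol : ∀ a b c, mul a (mul b (mul a c)) = mul (mul a (mul b a)) c)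
    (hinv_left : ∀ a b, mul (inv a) (mul a b) = b)
    (hinv_inv : ∀ a, inv (inv a) = a)
    (hAIP : ∀ a b, inv (mul a b) = mul (inv a) (inv b)) :
    (∀ x y z : L →₀ k,
      TensorProduct.lift ((loopMul mul).compl₁₂ LinearMap.id
          ((loopMul mul y) ∘ₗ ((loopMul mul).flip z))) (loopComul k L x)
        = TensorProduct.lift (((loopMul mul).compl₁₂ LinearMap.id (loopMul mul y)).compr₂
          ((loopMul mul).flip z)) (loopComul k L x)) ∧
    (∀ x y : L →₀ k,
      TensorProduct.lift ((loopMul mul).compl₁₂ LinearMap.id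
          (((loopMul mul).flip y) ∘ₗ loopAntipode inv)) (loopComul k L x)
        = loopCounit k L x • y ∧
      TensorProduct.lift ((loopMul mul).compl₁₂ (loopAntipode inv)
          ((loopMul mul).flip y)) (loopComul k L x)
        = loopCounit k L x • y) ∧
    (∀ x y : L →₀ k,
      loopAntipode inv (loopMul mul x y)
        = loopMul mul (loopAntipode inv x) (loopAntipode inv y)) ∧
    (∀ x : L →₀ k,
      loopComul k L (loopAntipode inv x)
        = TensorProduct.map (loopAntipode inv) (loopAntipode inv) (loopComul k L x)) := by
  have hinv_right : ∀ a b, mul a (mul (inv a) b) = b := fun a b => by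
    simpa only [hinv_inv] using hinv_left (inv a) b
  refine ⟨fun x y z => lift_loopComul_congr (fun a => ?_) x,
    fun x y => ⟨lift_loopComul_eq_loopCounit_smul (fun a => ?_) x,
      lift_loopComul_eq_loopCounit_smul (fun a => ?_) x⟩,
    fun x y => loopAntipode_loopMul hAIP x y, fun x => loopComul_loopAntipode x⟩
  · simpa using loopMul_single_bol hbol a y z
  · simpa using loopMul_single_loopMul_single (hinv_right a) y
  · simpa using loopMul_single_loopMul_single (hinv_left a) y

/-- The loop algebra `k[L]` of a left K-loop `L` is a K-Hopf loop:
(i) the linearized left Bol identity holds; (ii) the antipode satisfies the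
linearized left inverse property; (iii) the antipode is multiplicative;
(iv) the antipode is comultiplicative. -/
theorem loop_algebra_is_kHopfLoop {k L : Type*} [CommRing k]
    (mul : L → L → L) (e : L) (inv : L → L)
    (he_left : ∀ a, mul e a = a) (he_right : ∀ a, mul a e = a)
    (hex_left : ∀ a b, ∃! x, mul a x = b)
    (hex_right : ∀ a b, ∃! y, mul y a = b)
    (hbol : ∀ a b c, mul a (mul b (mul a c)) = mul (mul a (mul b a)) c)
    (hinv_left : ∀ a b, mul (inv a) (mul a b) = b)
    (hinv_inv : ∀ a, inv (inv a) = a)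
    (hAIP : ∀ a b, inv (mul a b) = mul (inv a) (inv b)) :
    (∀ x y z : L →₀ k,
      TensorProduct.lift ((loopMul mul).compl₁₂ LinearMap.id
          ((loopMul mul y) ∘ₗ ((loopMul mul).flip z))) (loopComul k L x)
        = TensorProduct.lift (((loopMul mul).compl₁₂ LinearMap.id (loopMul mul y)).compr₂
          ((loopMul mul).flip z)) (loopComul k L x)) ∧
    (∀ x y : L →₀ k,
      TensorProduct.lift ((loopMul mul).compl₁₂ LinearMap.id
          (((loopMul mul).flip y) ∘ₗ loopAntipode inv)) (loopComul k L x)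
        = loopCounit k L x • y ∧
      TensorProduct.lift ((loopMul mul).compl₁₂ (loopAntipode inv)
          ((loopMul mul).flip y)) (loopComul k L x)
        = loopCounit k L x • y) ∧
    (∀ x y : L →₀ k,
      loopAntipode inv (loopMul mul x y)
        = loopMul mul (loopAntipode inv x) (loopAntipode inv y)) ∧
    (∀ x : L →₀ k,
      loopComul k L (loopAntipode inv x)
        = TensorProduct.map (loopAntipode inv) (loopAntipode inv) (loopComul k L x)) :=
  loop_algebra_is_kHopfLoop_general mul inv hbol hinv_left hinv_inv hAIP
end
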